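/- Assume τ > 0 and τ ≥ min{γ̄, β̄·ℓ†}. Then every Wardrop equilibrium has σ*_toll = 0, i.e. no agent takes the HOT lane by paying the toll. -/

import Mathlib

/-!
Suppose an agent `(β, γ)` pays the toll. Comparing with carpooling gives `τ ≤ γ ≤ γ̄`, and
comparing with the ordinary lane gives `τ ≤ β ℓ_δ ≤ β̄ ℓ_δ`. If `γ̄ ≤ τ`, the toll payers lie on
the null segment `γ = γ̄`, so `σ_toll = 0`. Otherwise `β̄ ℓ† ≤ τ ≤ β̄ ℓ_δ`, so every agent strictly
below the ray `γ = min(τ, γ̄) β / β̄` strictly prefers carpooling and `σ†_pool ≤ σ_pool`. A positive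
toll share on top of that moves flow from the ordinary lane to the HOT lane, which forces
`ℓ_δ < ℓ†`: a contradiction.
-/

open MeasureTheory Set

namespace HOT

inductive Action : Type
  | toll
  | pool
  | o
  deriving DecidableEq

instance : MeasurableSpace Action := ⊤

/-- The rectangle of preference parameters `[0,β̄] × [0,γ̄]`. -/
def Rbox (βb γb : ℝ) : Set (ℝ × ℝ) := Icc (0:ℝ) βb ×ˢ Icc (0:ℝ) γb

/-- The strategy distribution of a strategy profile `s`: the `f`-mass of agents
in the rectangle choosing each action. -/
noncomputable def stratDist (βb γb : ℝ) (f : ℝ × ℝ → ℝ) (s : ℝ × ℝ → Action)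
    (a : Action) : ℝ :=
  ∫ p in Rbox βb γb ∩ s ⁻¹' {a}, f p

/-- HOT-lane vehicle flow induced by a strategy distribution. -/
noncomputable def xh (A : ℕ) (D : ℝ) (σ : Action → ℝ) : ℝ :=
  (σ Action.toll + σ Action.pool / (A : ℝ)) * D

/-- Ordinary-lane vehicle flow induced by a strategy distribution. -/
noncomputable def xo (D : ℝ) (σ : Action → ℝ) : ℝ := σ Action.o * D

/-- Latency difference `ℓ_δ(σ) = ℓ_o(x_o(σ)) − ℓ_h(x_h(σ))`. -/
noncomputable def ldiff (ℓo ℓh : ℝ → ℝ) (A : ℕ) (D : ℝ) (σ : Action → ℝ) : ℝ :=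
  ℓo (xo D σ) - ℓh (xh A D σ)

/-- The cost of agent `(β,γ)` for each action, given a strategy distribution. -/
noncomputable def cost (ℓo ℓh : ℝ → ℝ) (A : ℕ) (D τ : ℝ) (σ : Action → ℝ)
    (β γ : ℝ) : Action → ℝ
  | Action.toll => β * ℓh (xh A D σ) + τ
  | Action.pool => β * ℓh (xh A D σ) + γ
  | Action.o => β * ℓo (xo D σ)

/-- Wardrop equilibrium: every agent's action minimizes its own cost. -/
def IsWardrop (ℓo ℓh : ℝ → ℝ) (A : ℕ) (D τ βb γb : ℝ) (f : ℝ × ℝ → ℝ)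
    (s : ℝ × ℝ → Action) : Prop :=
  Measurable s ∧
  ∀ p ∈ Rbox βb γb, ∀ a : Action,
    cost ℓo ℓh A D τ (stratDist βb γb f s) p.1 p.2 (s p) ≤
      cost ℓo ℓh A D τ (stratDist βb γb f s) p.1 p.2 a

/-- Threshold carpool share `σ†_pool = ∫₀^β̄ ∫₀^{min(τ,γ̄)·β/β̄} f`. -/
noncomputable def sigmaDagger (βb γb τ : ℝ) (f : ℝ × ℝ → ℝ) : ℝ :=
  ∫ β in (0:ℝ)..βb, ∫ γ in (0:ℝ)..(min τ γb * β / βb), f (β, γ)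

/-- Threshold latency difference `ℓ† = ℓ_o((1−σ†)·D) − ℓ_h((σ†/A)·D)`. -/
noncomputable def ellDagger (ℓo ℓh : ℝ → ℝ) (A : ℕ) (D βb γb τ : ℝ)
    (f : ℝ × ℝ → ℝ) : ℝ :=
  ℓo ((1 - sigmaDagger βb γb τ f) * D) - ℓh (sigmaDagger βb γb τ f / (A : ℝ) * D)

/-- Regime-B toll share as a function of the latency difference `δ`. -/
noncomputable def gB (τ βb γb : ℝ) (f : ℝ × ℝ → ℝ) (δ : ℝ) : ℝ :=
  ∫ γ in τ..γb, ∫ β in (τ / δ)..βb, f (β, γ)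

/-- Regime-B carpool share as a function of the latency difference `δ`. -/
noncomputable def hB (τ βb : ℝ) (f : ℝ × ℝ → ℝ) (δ : ℝ) : ℝ :=
  ∫ γ in (0:ℝ)..τ, ∫ β in (γ / δ)..βb, f (β, γ)

end HOT

open HOT

namespace HOT

section Shares

variable {βb γb : ℝ} {f : ℝ × ℝ → ℝ} {s : ℝ × ℝ → Action}

theorem measurableSet_Rbox : MeasurableSet (Rbox βb γb) :=
  measurableSet_Icc.prod measurableSet_Icc

theorem isCompact_Rbox : IsCompact (Rbox βb γb) :=
  isCompact_Icc.prod isCompact_Icc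

theorem measurableSet_Rbox_inter_preimage (hs : Measurable s) (a : Action) :
    MeasurableSet (Rbox βb γb ∩ s ⁻¹' {a}) :=
  measurableSet_Rbox.inter (hs trivial)

theorem stratDist_nonneg (hs : Measurable s) (hf : ∀ p ∈ Rbox βb γb, 0 ≤ f p) (a : Action) :
    0 ≤ stratDist βb γb f s a :=
  setIntegral_nonneg (measurableSet_Rbox_inter_preimage hs a) fun p hp => hf p hp.1

theorem stratDist_toll_add_pool_add_o (hs : Measurable s) (hf : IntegrableOn f (Rbox βb γb)) :
    stratDist βb γb f s .toll + stratDist βb γb f s .pool + stratDist βb γb f s .o =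
      ∫ p in Rbox βb γb, f p := by
  have hcover :
      Rbox βb γb = ⋃ a ∈ ({.toll, .pool, .o} : Finset Action), Rbox βb γb ∩ s ⁻¹' {a} := by
    ext p
    cases h : s p <;> simp [h]
  have hdisj : Set.Pairwise (↑({.toll, .pool, .o} : Finset Action))
      (Function.onFun Disjoint fun a => Rbox βb γb ∩ s ⁻¹' {a}) := fun a _ b _ hab =>
    Set.disjoint_left.2 fun p (hpa : _ ∧ s p = a) (hpb : _ ∧ s p = b) =>
      hab (hpa.2.symm.trans hpb.2)
  conv_rhs => rw [hcover]
  rw [integral_biUnion_finset _ (fun a _ => measurableSet_Rbox_inter_preimage hs a) hdisj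
    fun a _ => hf.mono_set inter_subset_left]
  simp [stratDist, add_assoc]

theorem nonempty_of_stratDist_ne_zero {a : Action} (h : stratDist βb γb f s a ≠ 0) :
    (Rbox βb γb ∩ s ⁻¹' {a}).Nonempty :=
  Set.nonempty_iff_ne_empty.2 fun he => h (by simp [stratDist, he])

end Shares

theorem volume_setOf_snd_eq (c : ℝ) : volume {q : ℝ × ℝ | q.2 = c} = 0 := by
  have : {q : ℝ × ℝ | q.2 = c} = univ ×ˢ {c} := by ext q; simp
  rw [this, Measure.volume_eq_prod, Measure.prod_prod]
  simp

theorem setIntegral_Rbox_inter_lt_eq_intervalIntegral {βb γb : ℝ} {f : ℝ × ℝ → ℝ} {g : ℝ → ℝ}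
    (hβb : 0 ≤ βb) (hg : Measurable g) (hg0 : ∀ β ∈ Icc 0 βb, 0 ≤ g β)
    (hgγ : ∀ β ∈ Icc 0 βb, g β ≤ γb) (hf : IntegrableOn f (Rbox βb γb)) :
    ∫ q in Rbox βb γb ∩ {q | q.2 < g q.1}, f q = ∫ β in 0..βb, ∫ γ in 0..g β, f (β, γ) := by
  set T := Rbox βb γb ∩ {q | q.2 < g q.1}
  have hT : MeasurableSet T :=
    measurableSet_Rbox.inter (measurableSet_lt measurable_snd (hg.comp measurable_fst))
  have hslice : ∀ β ∈ Icc 0 βb, ∀ γ,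
      T.indicator f (β, γ) = (Ico 0 (g β)).indicator (fun γ => f (β, γ)) γ := by
    intro β hβ γ
    by_cases hγ : γ ∈ Ico 0 (g β)
    · have hT : (β, γ) ∈ T := ⟨⟨hβ, hγ.1, (hγ.2.trans_le (hgγ β hβ)).le⟩, hγ.2⟩
      rw [indicator_of_mem hγ, indicator_of_mem hT]
    · have hT : (β, γ) ∉ T := fun hmem => hγ ⟨hmem.1.2.1, hmem.2⟩
      rw [indicator_of_notMem hγ, indicator_of_notMem hT]
  calc ∫ q in T, f q = ∫ q in Icc 0 βb ×ˢ univ, T.indicator f q := by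
        rw [setIntegral_indicator hT]
        congr 2
        exact (inter_eq_right.2 fun q (hq : q ∈ T) => mem_prod.2 ⟨hq.1.1, mem_univ _⟩).symm
    _ = ∫ β in Icc 0 βb, ∫ γ, T.indicator f (β, γ) := by
        rw [Measure.volume_eq_prod, setIntegral_prod, Measure.restrict_univ]
        rw [← Measure.volume_eq_prod]
        exact ((integrable_indicator_iff hT).2 (hf.mono_set inter_subset_left)).integrableOn
    _ = ∫ β in Icc 0 βb, ∫ γ in 0..g β, f (β, γ) := by
        refine setIntegral_congr_fun measurableSet_Icc fun β hβ => ?_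
        simp only [hslice β hβ]
        rw [integral_indicator measurableSet_Ico, integral_Ico_eq_integral_Ioc,
          intervalIntegral.integral_of_le (hg0 β hβ)]
    _ = ∫ β in 0..βb, ∫ γ in 0..g β, f (β, γ) := by
        rw [integral_Icc_eq_integral_Ioc, intervalIntegral.integral_of_le hβb]

section Equilibrium

variable {ℓo ℓh : ℝ → ℝ} {A : ℕ} {D τ βb γb : ℝ} {f : ℝ × ℝ → ℝ} {s : ℝ × ℝ → Action}
  {p : ℝ × ℝ}

theorem IsWardrop.le_snd_of_toll (hs : IsWardrop ℓo ℓh A D τ βb γb f s) (hp : p ∈ Rbox βb γb)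
    (hsp : s p = .toll) : τ ≤ p.2 := by
  have h := hs.2 p hp .pool
  rw [hsp] at h
  simp only [cost] at h
  linarith

theorem IsWardrop.le_mul_ldiff_of_toll (hs : IsWardrop ℓo ℓh A D τ βb γb f s)
    (hp : p ∈ Rbox βb γb) (hsp : s p = .toll) :
    τ ≤ p.1 * ldiff ℓo ℓh A D (stratDist βb γb f s) := by
  have h := hs.2 p hp .o
  rw [hsp] at h
  simp only [cost] at h
  rw [ldiff, mul_sub]
  linarith

theorem IsWardrop.le_βb_mul_ldiff_of_toll (hs : IsWardrop ℓo ℓh A D τ βb γb f s) (hτ : 0 < τ)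
    (hp : p ∈ Rbox βb γb) (hsp : s p = .toll) :
    τ ≤ βb * ldiff ℓo ℓh A D (stratDist βb γb f s) := by
  have h := hs.le_mul_ldiff_of_toll hp hsp
  have hβ : p.1 ∈ Icc 0 βb := hp.1
  have hδ : 0 < ldiff ℓo ℓh A D (stratDist βb γb f s) := pos_of_mul_pos_right (hτ.trans_le h) hβ.1
  nlinarith [hβ.2]

theorem IsWardrop.eq_pool_of_lt (hs : IsWardrop ℓo ℓh A D τ βb γb f s) (hp : p ∈ Rbox βb γb)
    (hτ : p.2 < τ) (hδ : p.2 < p.1 * ldiff ℓo ℓh A D (stratDist βb γb f s)) : s p = .pool := by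
  cases hsp : s p with
  | toll => exact absurd (hs.le_snd_of_toll hp hsp) (not_le.2 hτ)
  | pool => rfl
  | o =>
    have h := hs.2 p hp .pool
    rw [hsp] at h
    simp only [cost] at h
    rw [ldiff, mul_sub] at hδ
    linarith

theorem IsWardrop.stratDist_toll_eq_zero (hs : IsWardrop ℓo ℓh A D τ βb γb f s) (hγb : γb ≤ τ) :
    stratDist βb γb f s .toll = 0 := by
  refine setIntegral_measure_zero _ (measure_mono_null ?_ (volume_setOf_snd_eq γb))
  exact fun q ⟨hq, hsq⟩ => le_antisymm hq.2.2 (hγb.trans (hs.le_snd_of_toll hq hsq))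

end Equilibrium

section Threshold

variable {βb γb τ : ℝ} {f : ℝ × ℝ → ℝ}

theorem sigmaDagger_eq_setIntegral (hβb : 0 < βb) (hγb : 0 ≤ γb) (hτ : 0 ≤ τ)
    (hf : IntegrableOn f (Rbox βb γb)) :
    sigmaDagger βb γb τ f = ∫ q in Rbox βb γb ∩ {q | q.2 < min τ γb * q.1 / βb}, f q := by
  have hc : 0 ≤ min τ γb := le_min hτ hγb
  refine (setIntegral_Rbox_inter_lt_eq_intervalIntegral hβb.le (by fun_prop)
    (fun β hβ => by have := hβ.1; positivity) (fun β hβ => ?_) hf).symm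
  rw [div_le_iff₀ hβb]
  exact mul_le_mul (min_le_right _ _) hβ.2 hβ.1 hγb

theorem sigmaDagger_nonneg (hβb : 0 < βb) (hγb : 0 ≤ γb) (hτ : 0 ≤ τ)
    (hf : IntegrableOn f (Rbox βb γb)) (hf0 : ∀ p ∈ Rbox βb γb, 0 ≤ f p) :
    0 ≤ sigmaDagger βb γb τ f := by
  rw [sigmaDagger_eq_setIntegral hβb hγb hτ hf]
  exact setIntegral_nonneg
    (measurableSet_Rbox.inter (measurableSet_lt measurable_snd
      ((measurable_fst.const_mul _).div_const _))) fun q hq => hf0 q hq.1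

theorem IsWardrop.sigmaDagger_le_stratDist_pool {ℓo ℓh : ℝ → ℝ} {A : ℕ} {D : ℝ}
    {s : ℝ × ℝ → Action} (hs : IsWardrop ℓo ℓh A D τ βb γb f s) (hβb : 0 < βb) (hγb : 0 ≤ γb)
    (hτ : 0 ≤ τ) (hf : IntegrableOn f (Rbox βb γb)) (hf0 : ∀ p ∈ Rbox βb γb, 0 ≤ f p)
    (hδ : τ ≤ βb * ldiff ℓo ℓh A D (stratDist βb γb f s)) :
    sigmaDagger βb γb τ f ≤ stratDist βb γb f s .pool := by
  rw [sigmaDagger_eq_setIntegral hβb hγb hτ hf]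
  refine setIntegral_mono_set (hf.mono_set inter_subset_left)
    ((ae_restrict_iff' (measurableSet_Rbox_inter_preimage hs.1 _)).2
      (Filter.Eventually.of_forall fun q hq => hf0 q hq.1)) (LE.le.eventuallyLE ?_)
  rintro q ⟨hq, hlt : q.2 < min τ γb * q.1 / βb⟩
  have hβ : q.1 ∈ Icc 0 βb := hq.1
  have hbound : min τ γb * q.1 / βb ≤ τ ∧
      min τ γb * q.1 / βb ≤ q.1 * ldiff ℓo ℓh A D (stratDist βb γb f s) := by
    simp only [div_le_iff₀ hβb]
    constructor <;> nlinarith [hβ.1, hβ.2, min_le_left τ γb, min_le_right τ γb]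
  exact ⟨hq, hs.eq_pool_of_lt hq (hlt.trans_le hbound.1) (hlt.trans_le hbound.2)⟩

end Threshold

theorem ldiff_lt_of_le_pool {ℓo ℓh : ℝ → ℝ} {A : ℕ} {D x : ℝ} {σ : Action → ℝ}
    (hom : MonotoneOn ℓo (Ici 0)) (hhm : StrictMonoOn ℓh (Ici 0)) (hD : 0 < D) (hA : 0 < A)
    (ho : 0 ≤ σ .o) (hx0 : 0 ≤ x) (hx : x ≤ σ .pool) (htoll : 0 < σ .toll)
    (hsum : σ .toll + σ .pool + σ .o = 1) :
    ldiff ℓo ℓh A D σ < ℓo ((1 - x) * D) - ℓh (x / A * D) := by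
  have hA' : (0 : ℝ) < A := Nat.cast_pos.2 hA
  have hxo : xo D σ ≤ (1 - x) * D := mul_le_mul_of_nonneg_right (by linarith) hD.le
  have hxh : x / A * D < xh A D σ := by
    refine mul_lt_mul_of_pos_right ?_ hD
    have := div_le_div_of_nonneg_right hx hA'.le
    linarith
  have hlo :=
    hom (mem_Ici.2 (mul_nonneg ho hD.le)) (mem_Ici.2 (mul_nonneg (by linarith) hD.le)) hxo
  have hxh0 : 0 ≤ x / A * D := by positivity
  have hlh := hhm (mem_Ici.2 hxh0) (mem_Ici.2 (hxh0.trans hxh.le)) hxh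
  rw [ldiff, xo]
  linarith

end HOT

theorem stmt3_general
    (ℓo ℓh : ℝ → ℝ) (A : ℕ) (D τ βb γb : ℝ) (f : ℝ × ℝ → ℝ)
    (hD : 0 < D) (hA : 2 ≤ A) (hβb : 0 < βb) (hγb : 0 < γb)
    (hom : StrictMonoOn ℓo (Ici 0))
    (hhm : StrictMonoOn ℓh (Ici 0))
    (hfc : ContinuousOn f (Rbox βb γb)) (hfpos : ∀ p ∈ Rbox βb γb, 0 < f p)
    (hfint : (∫ p in Rbox βb γb, f p) = 1)
    (hτ : 0 < τ)
    (hreg : min γb (βb * ellDagger ℓo ℓh A D βb γb τ f) ≤ τ)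
    (s : ℝ × ℝ → Action) (hs : IsWardrop ℓo ℓh A D τ βb γb f s) :
    stratDist βb γb f s Action.toll = 0 := by
  have hf : IntegrableOn f (Rbox βb γb) := hfc.integrableOn_compact isCompact_Rbox
  have hf0 : ∀ p ∈ Rbox βb γb, 0 ≤ f p := fun p hp => (hfpos p hp).le
  rcases min_le_iff.1 hreg with hγτ | hβτ
  · exact hs.stratDist_toll_eq_zero hγτ
  by_contra htoll
  obtain ⟨p, hp, hsp : s p = .toll⟩ := nonempty_of_stratDist_ne_zero htoll
  have hδ := hs.le_βb_mul_ldiff_of_toll hτ hp hsp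
  have hlt := ldiff_lt_of_le_pool hom.monotoneOn hhm hD (by omega : 0 < A)
    (stratDist_nonneg hs.1 hf0 _) (sigmaDagger_nonneg hβb hγb.le hτ.le hf hf0)
    (hs.sigmaDagger_le_stratDist_pool hβb hγb.le hτ.le hf hf0 hδ)
    ((stratDist_nonneg hs.1 hf0 _).lt_of_ne' htoll)
    ((stratDist_toll_add_pool_add_o hs.1 hf).trans hfint)
  have := mul_lt_mul_of_pos_left hlt hβb
  rw [← ellDagger] at this
  linarith

/-- in regime A (high toll), no agent pays the toll in equilibrium. -/
theorem stmt3
    (ℓo ℓh : ℝ → ℝ) (A : ℕ) (D τ βb γb : ℝ) (f : ℝ × ℝ → ℝ)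
    (hD : 0 < D) (hA : 2 ≤ A) (hβb : 0 < βb) (hγb : 0 < γb)
    (hoc : ContinuousOn ℓo (Ici 0)) (hom : StrictMonoOn ℓo (Ici 0))
    (hhc : ContinuousOn ℓh (Ici 0)) (hhm : StrictMonoOn ℓh (Ici 0))
    (hfree : ℓo 0 = ℓh 0)
    (hfc : ContinuousOn f (Rbox βb γb)) (hfpos : ∀ p ∈ Rbox βb γb, 0 < f p)
    (hfint : (∫ p in Rbox βb γb, f p) = 1)
    (hτ : 0 < τ)
    (hreg : min γb (βb * ellDagger ℓo ℓh A D βb γb τ f) ≤ τ)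
    (s : ℝ × ℝ → Action) (hs : IsWardrop ℓo ℓh A D τ βb γb f s) :
    stratDist βb γb f s Action.toll = 0 :=
  stmt3_general ℓo ℓh A D τ βb γb f hD hA hβb hγb hom hhm hfc hfpos hfint hτ hreg s hs
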